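/- For every nonempty cylinder C of dimension 2^n in Ω, there exist l ∈ {b,c,d} and N ∈ ℤ such that C = T^N([.w_n l]). -/

import Mathlib

inductive A : Type
  | a | b | c | d
deriving DecidableEq

def subst : A → List A
  | A.a => [A.a, A.c, A.a]
  | A.b => [A.d]
  | A.c => [A.b]
  | A.d => [A.c]

def substW (u : List A) : List A := u.flatMap subst

def wrd (n : ℕ) : List A := substW^[n - 1] [A.a]

def ltr (n : ℕ) : List A := substW^[n - 1] [A.c]

def seg (ξ : ℕ → A) (s m : ℕ) : List A := (List.range m).map fun i => ξ (s + 1 + i)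

def IsFixed (ξ : ℕ → A) : Prop :=
  ∀ N : ℕ, seg ξ 0 ((substW (seg ξ 0 N)).length) = substW (seg ξ 0 N)

/-- The phase space of the subshift: bi-infinite sequences all of whose finite
factors occur in the fixed point `ξ`. -/
def Omega (ξ : ℕ → A) : Set (ℤ → A) :=
  {ω | ∀ (s : ℤ) (m : ℕ), ∃ t : ℕ,
    seg ξ t m = (List.range m).map fun i => ω (s + 1 + (i : ℤ))}

/-- The `N`-th power of the shift map `T`. -/
def shiftN (N : ℤ) (ω : ℤ → A) : ℤ → A := fun i => ω (i + N)

/-- The cylinder `[u.v]` inside `Omega ξ`. -/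
def cyl (ξ : ℕ → A) (u v : List A) : Set (ℤ → A) :=
  {ω | ω ∈ Omega ξ ∧
    (List.range u.length).map (fun i => ω (1 + (i : ℤ) - u.length)) = u ∧
    (List.range v.length).map (fun i => ω (1 + (i : ℤ))) = v}

/-- The cylinder `[.v]` with empty past word. -/
def cylF (ξ : ℕ → A) (v : List A) : Set (ℤ → A) := cyl ξ [] v

/-! The fixed point is a Toeplitz word, `ξ k = A.next^[v₂ k] a`, so off the multiples of `2 ^ n`
it is `2 ^ n`-periodic. A word `W` of length `2 ^ n` occurring in `ξ` therefore reads
`toeplitz (i - r)` at each position `i ≠ r`, where `r` sits on the multiple of `2 ^ n` (a *center*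
of `W`), and its letter there lies in `{b, c, d}`; `w_n l` is such a word with center at its last
position. If an element of `Ω` agrees with `toeplitz` on `2 ^ n` consecutive positions around a
point, a longer window around that point is `toeplitz` translated by a multiple of `2 ^ (n - 1)`.
A multiple of `2 ^ n` extends the agreement to distance `< 2 ^ n`; an odd multiple would make
`r + 2 ^ (n - 1)` a second center when `r < 2 ^ (n - 1)`, and otherwise still covers the missing
positions. So for the greatest center `r`, occurrences of `W` and of `w_n W[r]` with the same center
force each other. -/

-- `σ` on `b, c, d`, extended by the middle letter of `σ a = aca`.
def A.next : A → A
  | A.a => A.c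
  | A.b => A.d
  | A.c => A.b
  | A.d => A.c

theorem A.next_ne_self (x : A) : x.next ≠ x := by cases x <;> decide

theorem A.next_ne_a (x : A) : x.next ≠ A.a := by cases x <;> decide

theorem A.eq_b_or_eq_c_or_eq_d {x : A} (hx : x ≠ A.a) : x = A.b ∨ x = A.c ∨ x = A.d := by
  cases x <;> simp_all

theorem A.iterate_next_eq_a_iff {e : ℕ} : A.next^[e] A.a = A.a ↔ e = 0 := by
  cases e with
  | zero => simp
  | succ e => simp [Function.iterate_succ_apply', A.next_ne_a]

theorem subst_of_ne_a {x : A} (hx : x ≠ A.a) : subst x = [x.next] := by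
  cases x <;> simp_all [subst, A.next]

theorem padicValInt_two_eq_of_dvd_of_not_dvd {x : ℤ} {e : ℕ} (h : 2 ^ e ∣ x)
    (h' : ¬ 2 ^ (e + 1) ∣ x) : padicValInt 2 x = e := by
  have hx : x ≠ 0 := by rintro rfl; exact h' (dvd_zero _)
  have hdvd := padicValInt_dvd_iff (p := 2) (hp := ⟨Nat.prime_two⟩)
  push_cast at hdvd
  have := (hdvd e x).1 h
  have := mt (hdvd (e + 1) x).2 h'
  omega

theorem not_dvd_of_mul_lt_of_lt_mul {M x j : ℤ} (hM : 0 < M) (h₁ : M * j < x)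
    (h₂ : x < M * (j + 1)) : ¬ M ∣ x := by
  rintro ⟨t, rfl⟩
  have := lt_of_mul_lt_mul_left h₁ hM.le
  have := lt_of_mul_lt_mul_left h₂ hM.le
  omega

/-- `ξ k = toeplitz k` for `k ≥ 1` (`IsFixed.apply_eq_toeplitz`); `toeplitz 0 = A.a` is a junk
value. -/
def toeplitz (x : ℤ) : A := A.next^[padicValInt 2 x] A.a

theorem toeplitz_neg (x : ℤ) : toeplitz (-x) = toeplitz x := by
  simp [toeplitz, padicValInt]

theorem toeplitz_eq_a_iff {x : ℤ} : toeplitz x = A.a ↔ x = 0 ∨ ¬ 2 ∣ x := by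
  rw [toeplitz, A.iterate_next_eq_a_iff, padicValInt.eq_zero_iff]
  simp

theorem toeplitz_two_mul {x : ℤ} (hx : x ≠ 0) : toeplitz (2 * x) = (toeplitz x).next := by
  have := padicValInt_mul_eq_succ (p := 2) (hp := ⟨Nat.prime_two⟩) x hx
  push_cast at this
  rw [toeplitz, toeplitz, mul_comm, this, Function.iterate_succ_apply']

theorem toeplitz_two_mul_add_one (x : ℤ) : toeplitz (2 * x + 1) = A.a :=
  toeplitz_eq_a_iff.2 (Or.inr (by omega))

theorem toeplitz_two_pow_mul {s : ℤ} (hs : ¬ 2 ∣ s) (e : ℕ) :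
    toeplitz (2 ^ e * s) = A.next^[e] A.a := by
  rw [toeplitz, padicValInt_two_eq_of_dvd_of_not_dvd (dvd_mul_right _ _)]
  rwa [pow_succ, mul_dvd_mul_iff_left (by positivity)]

theorem toeplitz_add_of_dvd_of_not_dvd {k : ℕ} {x y : ℤ} (hy : 2 ^ k ∣ y) (hx : ¬ 2 ^ k ∣ x) :
    toeplitz (y + x) = toeplitz x := by
  have hx0 : x ≠ 0 := by rintro rfl; exact hx (dvd_zero _)
  have hdvd := padicValInt_dvd_iff (p := 2) (hp := ⟨Nat.prime_two⟩)
  push_cast at hdvd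
  set e := padicValInt 2 x
  have hex : 2 ^ e ∣ x := (hdvd e x).2 (Or.inr le_rfl)
  have hex' : ¬ 2 ^ (e + 1) ∣ x := fun h => by have := (hdvd _ x).1 h; omega
  have hek : e < k := by
    by_contra hke
    exact hx ((pow_dvd_pow 2 (not_lt.1 hke)).trans hex)
  have hy' : 2 ^ (e + 1) ∣ y := (pow_dvd_pow 2 hek).trans hy
  rw [toeplitz, toeplitz, padicValInt_two_eq_of_dvd_of_not_dvd (e := e)]
  · exact dvd_add ((pow_dvd_pow 2 hek.le).trans hy) hex
  · rwa [dvd_add_right hy']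

theorem exists_toeplitz_add_ne (e : ℕ) {q : ℤ} (hq : ¬ 2 ∣ q) (a : ℤ) :
    ∃ m, a ≤ m ∧ m < a + 2 ^ (e + 2) ∧ m ≠ 0 ∧ toeplitz (2 ^ e * q + m) ≠ toeplitz m := by
  set x : ℤ := 2 ^ e * (2 - q)
  set j := (x - a) / 2 ^ (e + 2)
  have hM : (0 : ℤ) < 2 ^ (e + 2) := by positivity
  have hdiv := Int.emod_add_mul_ediv (x - a) (2 ^ (e + 2))
  have h0 := Int.emod_nonneg (x - a) hM.ne'
  have h1 := Int.emod_lt_of_pos (x - a) hM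
  refine ⟨a + (x - a) % 2 ^ (e + 2), by omega, by omega, ?_⟩
  -- `m ≡ 2 ^ e * (2 - q)` modulo `2 ^ (e + 2)`: `m` has valuation `e`, `2 ^ e * q + m` has `e + 1`
  have hm : a + (x - a) % 2 ^ (e + 2) = 2 ^ e * (2 - q - 4 * j) := by
    have hx : x = 2 ^ e * (2 - q) := rfl
    have hpow : (2 : ℤ) ^ (e + 2) = 2 ^ e * 4 := by ring
    linear_combination hdiv - hx - j * hpow
  have hs : ¬ 2 ∣ 2 - q - 4 * j := by omega
  have hs' : ¬ 2 ∣ 1 - 2 * j := by omega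
  have hqm : 2 ^ e * q + 2 ^ e * (2 - q - 4 * j) = 2 ^ (e + 1) * (1 - 2 * j) := by ring
  rw [hm, hqm, toeplitz_two_pow_mul hs, toeplitz_two_pow_mul hs', Function.iterate_succ_apply']
  refine ⟨mul_ne_zero (by positivity) ?_, A.next_ne_self _⟩
  rintro h
  simp [h] at hs

theorem two_pow_dvd_of_toeplitz_add_eq {k : ℕ} {q a : ℤ}
    (h : ∀ m, a ≤ m → m < a + 2 ^ (k + 1) → m ≠ 0 → toeplitz (q + m) = toeplitz m) :
    2 ^ k ∣ q := by
  suffices ∀ e ≤ k, 2 ^ e ∣ q from this k le_rfl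
  intro e
  induction e with
  | zero => simp
  | succ e ih =>
    intro he
    obtain ⟨q', rfl⟩ := ih (by omega)
    by_cases hq' : 2 ∣ q'
    · obtain ⟨q'', rfl⟩ := hq'
      exact ⟨q'', by ring⟩
    · obtain ⟨m, ham, hmb, hm0, hne⟩ := exists_toeplitz_add_ne e hq' a
      have : (2 : ℤ) ^ (e + 2) ≤ 2 ^ (k + 1) := pow_le_pow_right₀ (by norm_num) (by omega)
      exact absurd (h m ham (by omega) hm0) hne

theorem substW_append (x y : List A) : substW (x ++ y) = substW x ++ substW y :=
  List.flatMap_append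

def toeplitzPrefix (m : ℕ) : List A := (List.range m).map fun i : ℕ => toeplitz (i + 1)

theorem toeplitzPrefix_succ (m : ℕ) :
    toeplitzPrefix (m + 1) = toeplitzPrefix m ++ [toeplitz (m + 1)] := by
  simp [toeplitzPrefix, List.range_succ]

theorem substW_toeplitzPrefix_two_mul (m : ℕ) :
    substW (toeplitzPrefix (2 * m)) = toeplitzPrefix (4 * m) := by
  induction m with
  | zero => rfl
  | succ m ih =>
    rw [show 2 * (m + 1) = 2 * m + 1 + 1 by ring,
      show 4 * (m + 1) = 4 * m + 1 + 1 + 1 + 1 by ring]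
    simp only [toeplitzPrefix_succ, substW_append, ih, List.append_assoc]
    push_cast
    have hm : (m : ℤ) + 1 ≠ 0 := by omega
    rw [show 2 * (m : ℤ) + 1 + 1 = 2 * (m + 1) by ring,
      show 4 * (m : ℤ) + 1 + 1 = 2 * (2 * m + 1) by ring,
      show 4 * (m : ℤ) + 1 = 2 * (2 * m) + 1 by ring,
      show 4 * (m : ℤ) + 2 + 1 = 2 * (2 * m + 1) + 1 by ring,
      show 4 * (m : ℤ) + 3 + 1 = 2 * (2 * (m + 1)) by ring,
      toeplitz_two_mul (x := 2 * (m + 1)) (by omega), toeplitz_two_mul hm,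
      toeplitz_two_mul (x := 2 * m + 1) (by omega)]
    simp only [toeplitz_two_mul_add_one]
    simp only [substW, List.flatMap_cons, List.flatMap_nil, subst_of_ne_a (A.next_ne_a _)]
    rfl

theorem substW_toeplitzPrefix_two_mul_add_one (m : ℕ) :
    substW (toeplitzPrefix (2 * m + 1)) = toeplitzPrefix (4 * m + 3) := by
  rw [toeplitzPrefix_succ, substW_append, substW_toeplitzPrefix_two_mul,
    show 4 * m + 3 = 4 * m + 1 + 1 + 1 by ring]
  simp only [toeplitzPrefix_succ, List.append_assoc]
  push_cast
  rw [show 4 * (m : ℤ) + 1 + 1 = 2 * (2 * m + 1) by ring,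
    show 4 * (m : ℤ) + 2 + 1 = 2 * (2 * m + 1) + 1 by ring,
    show 4 * (m : ℤ) + 1 = 2 * (2 * m) + 1 by ring,
    toeplitz_two_mul (by omega)]
  simp only [toeplitz_two_mul_add_one]
  rfl

theorem wrd_add_two (k : ℕ) : wrd (k + 2) = substW (wrd (k + 1)) :=
  Function.iterate_succ_apply' _ _ _

theorem wrd_succ_eq_toeplitzPrefix (k : ℕ) : wrd (k + 1) = toeplitzPrefix (2 ^ (k + 1) - 1) := by
  induction k with
  | zero =>
    simpa [wrd, toeplitzPrefix] using (toeplitz_two_mul_add_one 0).symm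
  | succ k ih =>
    have h := Nat.one_le_two_pow (n := k)
    rw [wrd_add_two, ih, show 2 ^ (k + 1) - 1 = 2 * (2 ^ k - 1) + 1 by rw [pow_succ]; omega,
      substW_toeplitzPrefix_two_mul_add_one]
    congr 1
    rw [pow_succ, pow_succ]
    omega

theorem length_wrd_succ (k : ℕ) : (wrd (k + 1)).length = 2 ^ (k + 1) - 1 := by
  simp [wrd_succ_eq_toeplitzPrefix, toeplitzPrefix]

theorem IsFixed.apply_one {ξ : ℕ → A} (hξ : IsFixed ξ) : ξ 1 = A.a := by
  by_contra h
  have := hξ 1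
  simp [seg, substW, subst_of_ne_a h] at this
  exact A.next_ne_self _ this.symm

theorem IsFixed.seg_zero_eq_wrd {ξ : ℕ → A} (hξ : IsFixed ξ) (k : ℕ) :
    seg ξ 0 (2 ^ (k + 1) - 1) = wrd (k + 1) := by
  induction k with
  | zero => simp [seg, wrd, hξ.apply_one]
  | succ k ih =>
    have h := hξ (2 ^ (k + 1) - 1)
    rwa [ih, ← wrd_add_two, length_wrd_succ] at h

theorem IsFixed.apply_eq_toeplitz {ξ : ℕ → A} (hξ : IsFixed ξ) (j : ℕ) :
    ξ (j + 1) = toeplitz (j + 1) := by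
  have h := hξ.seg_zero_eq_wrd j
  rw [wrd_succ_eq_toeplitzPrefix, seg, toeplitzPrefix, List.map_inj_left] at h
  have := Nat.lt_two_pow_self (n := j)
  simpa [add_comm] using h j (List.mem_range.2 (by rw [pow_succ]; omega))

-- `Omega` and `cyl` map over `List.range m` coerced to `List ℤ`, which elaborates to this bind.
theorem range_bind_natCast (m : ℕ) :
    (List.range m >>= fun i => pure (i : ℤ)) = (List.range m).map (fun i : ℕ => (i : ℤ)) := by
  simp only [List.pure_def, List.bind_eq_flatMap, ← List.map_eq_flatMap]

theorem IsFixed.exists_toeplitz_window {ξ : ℕ → A} (hξ : IsFixed ξ) {ω : ℤ → A}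
    (hω : ω ∈ Omega ξ) (a b : ℤ) :
    ∃ q, 0 < q + a ∧ ∀ m, a ≤ m → m < b → ω m = toeplitz (q + m) := by
  obtain ⟨t, ht⟩ := hω (a - 1) (b - a).toNat
  simp only [seg, range_bind_natCast, List.map_map, List.map_inj_left, List.mem_range,
    Function.comp_apply] at ht
  refine ⟨t + 1 - a, by omega, fun m ham hmb => ?_⟩
  have h := ht (m - a).toNat (by omega)
  rw [show t + 1 + (m - a).toNat = t + (m - a).toNat + 1 by ring, hξ.apply_eq_toeplitz] at h
  rw [show m = a - 1 + 1 + ((m - a).toNat : ℤ) by omega, ← h]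
  congr 1
  push_cast
  omega

def OccursAt (W : List A) (ω : ℤ → A) (p : ℤ) : Prop :=
  ∀ i (hi : i < W.length), ω (p + i) = W[i]

theorem occursAt_append {x y : List A} {ω : ℤ → A} {p : ℤ} :
    OccursAt (x ++ y) ω p ↔ OccursAt x ω p ∧ OccursAt y ω (p + x.length) := by
  constructor
  · intro h
    refine ⟨fun i hi => ?_, fun i hi => ?_⟩
    · have := h i (by simp; omega)
      rwa [List.getElem_append_left hi] at this
    · have := h (x.length + i) (by simp; omega)
      rw [List.getElem_append_right (by omega)] at this
      simpa [add_assoc] using this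
  · rintro ⟨hx, hy⟩ i hi
    rw [List.getElem_append]
    split_ifs with h
    · exact hx i h
    · rw [← hy (i - x.length) (by simp at hi; omega)]
      congr 1
      push_cast [Nat.cast_sub (not_lt.1 h)]
      ring

theorem occursAt_shiftN {W : List A} {ω : ℤ → A} {p N : ℤ} :
    OccursAt W (shiftN N ω) p ↔ OccursAt W ω (p + N) := by
  simp only [OccursAt, shiftN, add_right_comm]

theorem map_range_length_eq_iff {f : ℕ → A} {W : List A} :
    (List.range W.length).map f = W ↔ ∀ i (hi : i < W.length), f i = W[i] := by
  rw [List.ext_getElem_iff]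
  simp

theorem mem_cyl_iff {ξ : ℕ → A} {u v : List A} {ω : ℤ → A} :
    ω ∈ cyl ξ u v ↔ ω ∈ Omega ξ ∧ OccursAt (u ++ v) ω (1 - u.length) := by
  rw [occursAt_append]
  simp only [cyl, Set.mem_ofPred_eq, range_bind_natCast, List.map_map, map_range_length_eq_iff,
    OccursAt, Function.comp_apply, sub_add_cancel, add_sub_right_comm]

theorem shiftN_mem_Omega {ξ : ℕ → A} {ω : ℤ → A} (hω : ω ∈ Omega ξ) (N : ℤ) :
    shiftN N ω ∈ Omega ξ := by
  intro s m
  obtain ⟨t, ht⟩ := hω (s + N) m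
  refine ⟨t, ht.trans ?_⟩
  simp only [shiftN]
  ring_nf

theorem mem_shiftN_image_cylF {ξ : ℕ → A} {W : List A} {ω : ℤ → A} {N : ℤ} :
    ω ∈ shiftN N '' cylF ξ W ↔ ω ∈ Omega ξ ∧ OccursAt W ω (1 - N) := by
  have hinv : ∀ M ω', shiftN M (shiftN (-M) ω') = ω' := fun M ω' => by
    funext i
    simp [shiftN]
  rw [Set.image_eq_preimage_of_inverse (g := shiftN (-N)) (fun ω' => by simpa using hinv (-N) ω')
    (hinv N), Set.mem_preimage, cylF, mem_cyl_iff, occursAt_shiftN]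
  refine and_congr ⟨fun h => ?_, fun h => shiftN_mem_Omega h _⟩ (by simp [sub_eq_add_neg])
  simpa [hinv] using shiftN_mem_Omega h N

def ToeplitzOn (ω : ℤ → A) (c a b : ℤ) : Prop :=
  ∀ m, a ≤ m → m < b → m ≠ 0 → ω (c + m) = toeplitz m

def IsCenter (W : List A) (r : ℕ) : Prop :=
  r < W.length ∧ ∀ i (hi : i < W.length), i ≠ r → W[i] = toeplitz ((i : ℤ) - r)

theorem occursAt_iff_of_isCenter {W : List A} {r : ℕ} (hr : IsCenter W r) {ω : ℤ → A} {c : ℤ} :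
    OccursAt W ω (c - r) ↔ ω c = W[r]'hr.1 ∧ ToeplitzOn ω c (-r) (W.length - r) := by
  constructor
  · intro h
    refine ⟨by simpa using h r hr.1, fun m hm₁ hm₂ hm₀ => ?_⟩
    have := h (m + r).toNat (by omega)
    rwa [hr.2 _ _ (by omega), show c - r + ((m + r).toNat : ℤ) = c + m by omega,
      show ((m + r).toNat : ℤ) - r = m by omega] at this
  · rintro ⟨hc, hreg⟩ i hi
    by_cases hir : i = r
    · subst hir
      simpa using hc
    · rw [hr.2 i hi hir, ← hreg (i - r) (by omega) (by omega) (by omega)]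
      ring_nf

theorem isCenter_wrd_append (k : ℕ) (l : A) :
    IsCenter (wrd (k + 1) ++ [l]) (2 ^ (k + 1) - 1) := by
  have hpos := Nat.one_le_two_pow (n := k + 1)
  refine ⟨by simp [length_wrd_succ], fun i hi hil => ?_⟩
  have hi' : i + 1 < 2 ^ (k + 1) := by simp [length_wrd_succ] at hi; omega
  have hiZ : (i : ℤ) + 1 < 2 ^ (k + 1) := by exact_mod_cast hi'
  rw [List.getElem_append_left (by rw [length_wrd_succ]; omega)]
  simp only [wrd_succ_eq_toeplitzPrefix, toeplitzPrefix, List.getElem_map, List.getElem_range]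
  rw [show (i : ℤ) - ((2 ^ (k + 1) - 1 : ℕ) : ℤ) = -2 ^ (k + 1) + (i + 1) by
      push_cast [hpos]; ring,
    toeplitz_add_of_dvd_of_not_dvd (dvd_neg.2 dvd_rfl)
      (not_dvd_of_mul_lt_of_lt_mul (j := 0) (by positivity) (by omega) (by omega))]

theorem occursAt_wrd_append_iff {k : ℕ} {l : A} {ω : ℤ → A} {c : ℤ} :
    OccursAt (wrd (k + 1) ++ [l]) ω (c + 1 - 2 ^ (k + 1)) ↔
      ω c = l ∧ ToeplitzOn ω c (1 - 2 ^ (k + 1)) 1 := by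
  have hpos := Nat.one_le_two_pow (n := k + 1)
  have h := occursAt_iff_of_isCenter (isCenter_wrd_append k l) (ω := ω) (c := c)
  simp [length_wrd_succ, Nat.cast_sub hpos] at h
  rwa [show c + 1 - 2 ^ (k + 1) = c - (2 ^ (k + 1) - 1) by ring]

theorem isCenter_of_toeplitz_window {W : List A} {n r : ℕ} {q : ℤ}
    (hW : ∀ i (hi : i < W.length), W[i] = toeplitz (q + i)) (hlen : W.length = 2 ^ n)
    (hr : r < 2 ^ n) (hdvd : 2 ^ n ∣ q + r) : IsCenter W r := by
  refine ⟨hlen ▸ hr, fun i hi hir => ?_⟩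
  have hi' : (i : ℤ) < 2 ^ n := by exact_mod_cast hlen ▸ hi
  have hr' : (r : ℤ) < 2 ^ n := by exact_mod_cast hr
  rw [hW, show q + i = q + r + (i - r) by ring, toeplitz_add_of_dvd_of_not_dvd hdvd]
  rcases lt_or_gt_of_ne hir with h | h
  · exact not_dvd_of_mul_lt_of_lt_mul (j := -1) (by positivity) (by omega) (by omega)
  · exact not_dvd_of_mul_lt_of_lt_mul (j := 0) (by positivity) (by omega) (by omega)

theorem IsCenter.getElem_ne_a {W : List A} {r : ℕ} (hr : IsCenter W r) {q : ℤ} (hq : 0 < q)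
    (hW : ∀ i (hi : i < W.length), W[i] = toeplitz (q + i)) (hlen : 2 ≤ W.length) :
    W[r]'hr.1 ≠ A.a := by
  obtain ⟨j, hj, hjr⟩ : ∃ j, j < W.length ∧ (j = r + 1 ∨ j + 1 = r) := by
    have := hr.1
    by_cases h : r + 1 < W.length
    · exact ⟨r + 1, h, .inl rfl⟩
    · exact ⟨r - 1, by omega, .inr (by omega)⟩
  have hja : toeplitz (q + j) = A.a := by
    rw [← hW j hj, hr.2 j hj (by omega), toeplitz_eq_a_iff]
    omega
  rw [toeplitz_eq_a_iff] at hja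
  rw [hW, Ne, toeplitz_eq_a_iff]
  omega

theorem IsCenter.add_two_pow {W : List A} {k r : ℕ} (hr : IsCenter W r)
    (hlen : W.length = 2 ^ (k + 1)) (hrk : r < 2 ^ k) (hWr : W[r]'hr.1 = toeplitz (2 ^ k)) :
    IsCenter W (r + 2 ^ k) := by
  refine ⟨by rw [hlen, pow_succ]; omega, fun i hi hir => ?_⟩
  by_cases hir' : i = r
  · subst hir'
    rw [hWr, ← toeplitz_neg]
    push_cast
    ring_nf
  rw [hr.2 i hi hir', show (i : ℤ) - ((r + 2 ^ k : ℕ) : ℤ) = -2 ^ k + (i - r) by push_cast; ring,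
    toeplitz_add_of_dvd_of_not_dvd (dvd_neg.2 dvd_rfl)]
  have hrk' : (r : ℤ) < 2 ^ k := by exact_mod_cast hrk
  have hi' : (i : ℤ) < 2 * 2 ^ k := by rw [← pow_succ']; exact_mod_cast hlen ▸ hi
  have hir'' : (i : ℤ) ≠ r + 2 ^ k := by exact_mod_cast hir
  rcases lt_trichotomy (i : ℤ) r with h | h | h
  · exact not_dvd_of_mul_lt_of_lt_mul (j := -1) (by positivity) (by omega) (by omega)
  · omega
  rcases lt_or_gt_of_ne hir'' with h' | h'
  · exact not_dvd_of_mul_lt_of_lt_mul (j := 0) (by positivity) (by omega) (by omega)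
  · exact not_dvd_of_mul_lt_of_lt_mul (j := 1) (by positivity) (by omega) (by omega)

theorem two_pow_succ_dvd_or_le_of_isGreatest {W : List A} {k r : ℕ} {q : ℤ}
    (hr : IsGreatest {r | IsCenter W r} r) (hlen : W.length = 2 ^ (k + 1))
    (hq : 2 ^ k ∣ q) (hWr : W[r]'hr.1.1 = toeplitz q) : 2 ^ (k + 1) ∣ q ∨ 2 ^ k ≤ r := by
  by_contra! h
  obtain ⟨hq', hrk⟩ := h
  have hpos : (0 : ℤ) < 2 ^ k := by positivity
  have hL : (2 : ℤ) ^ (k + 1) = 2 * 2 ^ k := pow_succ' 2 k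
  obtain ⟨j, rfl⟩ := hq
  have hj : j - 1 = 2 * ((j - 1) / 2) := by
    have : ¬ 2 ∣ j := fun ⟨t, ht⟩ => hq' ⟨t, by rw [ht]; ring⟩
    omega
  have h2k : W[r]'hr.1.1 = toeplitz (2 ^ k) := by
    rw [hWr, show 2 ^ k * j = 2 ^ (k + 1) * ((j - 1) / 2) + 2 ^ k by
        rw [pow_succ]; linear_combination 2 ^ k * hj,
      toeplitz_add_of_dvd_of_not_dvd (dvd_mul_right _ _)
        (not_dvd_of_mul_lt_of_lt_mul (j := 0) (by positivity) (by omega) (by omega))]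
  have := hr.2 ((hr.1 : IsCenter W r).add_two_pow hlen hrk h2k)
  have := Nat.one_le_two_pow (n := k)
  omega

theorem IsFixed.exists_isGreatest_isCenter {ξ : ℕ → A} (hξ : IsFixed ξ) {ω : ℤ → A}
    (hω : ω ∈ Omega ξ) {W : List A} {p : ℤ} (hW : OccursAt W ω p) {k : ℕ}
    (hlen : W.length = 2 ^ (k + 1)) :
    ∃ r, ∃ hr : IsGreatest {r | IsCenter W r} r, W[r]'hr.1.1 ≠ A.a := by
  obtain ⟨q, hq, hwin⟩ := hξ.exists_toeplitz_window hω p (p + W.length)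
  have hWq : ∀ i (hi : i < W.length), W[i] = toeplitz (q + p + i) := fun i hi => by
    rw [← hW i hi, hwin _ (by omega) (by omega), add_assoc]
  have hM : (0 : ℤ) < 2 ^ (k + 1) := by positivity
  have h₀ := Int.emod_nonneg (-(q + p)) hM.ne'
  have h₁ := Int.emod_lt_of_pos (-(q + p)) hM
  have hcast : (((-(q + p)) % 2 ^ (k + 1)).toNat : ℤ) = (-(q + p)) % 2 ^ (k + 1) :=
    Int.toNat_of_nonneg h₀
  have hcenter := isCenter_of_toeplitz_window (r := ((-(q + p)) % 2 ^ (k + 1)).toNat) hWq hlen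
    (by zify; omega)
    ⟨-((-(q + p)) / 2 ^ (k + 1)), by
      rw [hcast]; linear_combination Int.emod_add_mul_ediv (-(q + p)) (2 ^ (k + 1))⟩
  obtain ⟨r, hr⟩ := BddAbove.exists_isGreatest_of_nonempty
    ⟨W.length, fun r (hr : IsCenter W r) => hr.1.le⟩ ⟨_, hcenter⟩
  have := Nat.one_le_two_pow (n := k)
  exact ⟨r, hr, IsCenter.getElem_ne_a hr.1 hq hWq (by rw [hlen, pow_succ]; omega)⟩

theorem IsFixed.toeplitzOn_iff {ξ : ℕ → A} (hξ : IsFixed ξ) {ω : ℤ → A} (hω : ω ∈ Omega ξ)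
    {W : List A} {k r : ℕ} (hr : IsGreatest {r | IsCenter W r} r) (hlen : W.length = 2 ^ (k + 1))
    {c : ℤ} (hc : ω c = W[r]'hr.1.1) :
    ToeplitzOn ω c (-r) (W.length - r) ↔ ToeplitzOn ω c (1 - 2 ^ (k + 1)) 1 := by
  have hL : ((W.length : ℕ) : ℤ) = 2 ^ (k + 1) := by rw [hlen]; push_cast; ring
  have hL' : (2 : ℤ) ^ (k + 1) = 2 * 2 ^ k := pow_succ' 2 k
  have hpos : (0 : ℤ) < 2 ^ k := by positivity
  have hrL : (r : ℤ) < W.length := by exact_mod_cast hr.1.1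
  rw [hL] at hrL ⊢
  obtain ⟨q, -, hq⟩ := hξ.exists_toeplitz_window hω (c + 1 - 2 ^ (k + 1)) (c + 2 ^ (k + 1) - r)
  have hwin : ∀ m : ℤ, 1 - 2 ^ (k + 1) ≤ m → m < 2 ^ (k + 1) - r →
      ω (c + m) = toeplitz (q + c + m) :=
    fun m h₁ h₂ => by rw [hq _ (by omega) (by omega), add_assoc]
  -- the known half forces `2 ^ k ∣ q + c`; maximality of `r` excludes `q + c ≡ 2 ^ k` for small `r`
  have hcases : ∀ a : ℤ, 1 - 2 ^ (k + 1) ≤ a → a ≤ -r → ToeplitzOn ω c a (a + 2 ^ (k + 1)) →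
      2 ^ (k + 1) ∣ q + c ∨ (2 ^ k ∣ q + c ∧ (2 : ℤ) ^ k ≤ r) := by
    intro a ha₁ ha₂ hreg
    have hk : 2 ^ k ∣ q + c := two_pow_dvd_of_toeplitz_add_eq (a := a) fun m hm₁ hm₂ hm₀ => by
      rw [← hwin m (by omega) (by omega)]
      exact hreg m hm₁ hm₂ hm₀
    have hWr : W[r]'hr.1.1 = toeplitz (q + c) := by
      simpa [hc] using hwin 0 (by omega) (by omega)
    exact (two_pow_succ_dvd_or_le_of_isGreatest hr hlen hk hWr).imp_right
      fun h => ⟨hk, by exact_mod_cast h⟩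
  constructor
  · intro hreg m hm₁ hm₂ hm₀
    by_cases hmr : -(r : ℤ) ≤ m
    · exact hreg m hmr (by omega) hm₀
    rw [hwin m hm₁ (by omega)]
    rcases hcases (-r) (by omega) le_rfl (by rwa [neg_add_eq_sub]) with h | ⟨h, hkr⟩
    · exact toeplitz_add_of_dvd_of_not_dvd h
        (not_dvd_of_mul_lt_of_lt_mul (j := -1) (by positivity) (by omega) (by omega))
    · exact toeplitz_add_of_dvd_of_not_dvd h
        (not_dvd_of_mul_lt_of_lt_mul (j := -2) hpos (by omega) (by omega))
  · intro hreg m hm₁ hm₂ hm₀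
    by_cases hm : m < 0
    · exact hreg m (by omega) (by omega) hm₀
    rw [hwin m (by omega) hm₂]
    rcases hcases (1 - 2 ^ (k + 1)) le_rfl (by omega) (by rwa [sub_add_cancel]) with h | ⟨h, hkr⟩
    · exact toeplitz_add_of_dvd_of_not_dvd h
        (not_dvd_of_mul_lt_of_lt_mul (j := 0) (by positivity) (by omega) (by omega))
    · exact toeplitz_add_of_dvd_of_not_dvd h
        (not_dvd_of_mul_lt_of_lt_mul (j := 0) hpos (by omega) (by omega))

theorem stmt14 (ξ : ℕ → A) (hξ : IsFixed ξ) :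
    ∀ n : ℕ, 1 ≤ n → ∀ u v : List A, u.length + v.length = 2 ^ n →
      (cyl ξ u v).Nonempty →
      ∃ lt : A, (lt = A.b ∨ lt = A.c ∨ lt = A.d) ∧
        ∃ N : ℤ, cyl ξ u v = shiftN N '' cylF ξ (wrd n ++ [lt]) := by
  intro n hn u v hlen ⟨ω₀, hω₀⟩
  obtain ⟨k, rfl⟩ : ∃ k, n = k + 1 := ⟨n - 1, by omega⟩
  rw [mem_cyl_iff] at hω₀
  have hW : (u ++ v).length = 2 ^ (k + 1) := by rw [List.length_append, hlen]
  obtain ⟨r, hr, hWr⟩ := hξ.exists_isGreatest_isCenter hω₀.1 hω₀.2 hW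
  refine ⟨_, A.eq_b_or_eq_c_or_eq_d hWr, u.length + 2 ^ (k + 1) - 1 - r, ?_⟩
  ext ω
  -- `N` puts the center of `wrd n ++ [lt]` on the center `1 - u.length + r` of `u ++ v`
  rw [mem_cyl_iff, mem_shiftN_image_cylF, show 1 - (u.length : ℤ) = 1 - u.length + r - r by ring,
    show 1 - (u.length + 2 ^ (k + 1) - 1 - r : ℤ) = 1 - u.length + r + 1 - 2 ^ (k + 1) by ring,
    occursAt_iff_of_isCenter hr.1, occursAt_wrd_append_iff]
  exact and_congr_right fun hω => and_congr_right fun hc => hξ.toeplitzOn_iff hω hr hW hc
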